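/- Let V > 0, C₁ > 0, and k > 2. There exists a finite constant Q', depending only on (V, C₁, k), such that for all Borel probability measures G0, G1 on ℝ with mean zero and variance bounded by V, where G1 satisfies max(1 − G1((−∞,s]), G1((−∞,−s])) ≤ C₁·s^{−k} for all s > 0, and every σ ≥ 1: ∫_{{μ : |μ| < σ}} ∫_0^∞ s (∫_{−∞}^{∞} S_{G1,σ}(s, x) φ_σ(x − μ) dx) ds dG0(μ) ≤ Q'. -/

import Mathlib

open MeasureTheory Real Set

/-- The `N(0, σ²)` density `φ_σ(t) = (2πσ²)^{-1/2} exp(-t²/(2σ²))`. -/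
noncomputable def gaussDens (σ t : ℝ) : ℝ :=
  (Real.sqrt (2 * Real.pi * σ ^ 2))⁻¹ * Real.exp (-t ^ 2 / (2 * σ ^ 2))

/-- Marginal density `f_{G,σ}(x) = ∫ φ_σ(x-θ) dG(θ)`. -/
noncomputable def margDens (G : Measure ℝ) (σ x : ℝ) : ℝ :=
  ∫ θ, gaussDens σ (x - θ) ∂G

/-- Posterior mean `m_{G,σ}(x) = (∫ θ φ_σ(x-θ) dG(θ)) / f_{G,σ}(x)`. -/
noncomputable def postMean (G : Measure ℝ) (σ x : ℝ) : ℝ :=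
  (∫ θ, θ * gaussDens σ (x - θ) ∂G) / margDens G σ x

/-- Posterior survival probability `S_{G,σ}(s,x) = (∫_{(s,∞)} φ_σ(x-θ) dG(θ)) / f_{G,σ}(x)`. -/
noncomputable def postSurv (G : Measure ℝ) (σ s x : ℝ) : ℝ :=
  (∫ θ in Set.Ioi s, gaussDens σ (x - θ)  ∂G) / margDens G σ x

/-- `G` has mean zero and variance bounded by `V`. -/
def MeanZeroVarLe (G : Measure ℝ) (V : ℝ) : Prop :=
  Integrable (fun θ : ℝ => θ) G ∧ Integrable (fun θ : ℝ => θ ^ 2) G ∧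
    (∫ θ, θ ∂G) = 0 ∧ (∫ θ, θ ^ 2 ∂G) ≤ V

/-- The tail condition `max(1 - G((-∞,s]), G((-∞,-s])) ≤ C s^{-k}` for all `s > 0`. -/
def TailCond (G : Measure ℝ) (C k : ℝ) : Prop :=
  ∀ s : ℝ, 0 < s →
    max (1 - (G (Set.Iic s)).toReal) ((G (Set.Iic (-s))).toReal) ≤ C * s ^ (-k)

/-- Complementary standard Gaussian CDF `Φ̄(x) = ∫_x^∞ (2π)^{-1/2} exp(-t²/2) dt`. -/
noncomputable def compPhi (x : ℝ) : ℝ :=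
  ∫ t in Set.Ioi x, (Real.sqrt (2 * Real.pi))⁻¹ * Real.exp (-t ^ 2 / 2)

lemma gaussDens_pos {σ : ℝ} (hσ : 0 < σ) (t : ℝ) : 0 < gaussDens σ t := by
  unfold gaussDens
  positivity

lemma gaussDens_nonneg {σ : ℝ} (hσ : 0 < σ) (t : ℝ) : 0 ≤ gaussDens σ t :=
  (gaussDens_pos hσ t).le

lemma gaussDens_le {σ : ℝ} (hσ : 0 < σ) (t : ℝ) :
    gaussDens σ t ≤ (Real.sqrt (2 * Real.pi * σ ^ 2))⁻¹ := by
  unfold gaussDens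
  have h1 : Real.exp (-t ^ 2 / (2 * σ ^ 2)) ≤ 1 := by
    rw [Real.exp_le_one_iff]
    have h2 : (0:ℝ) < 2 * σ ^ 2 := by positivity
    apply div_nonpos_of_nonpos_of_nonneg (by nlinarith [sq_nonneg t]) h2.le
  calc (Real.sqrt (2 * Real.pi * σ ^ 2))⁻¹ * Real.exp (-t ^ 2 / (2 * σ ^ 2))
      ≤ (Real.sqrt (2 * Real.pi * σ ^ 2))⁻¹ * 1 := by gcongr
    _ = (Real.sqrt (2 * Real.pi * σ ^ 2))⁻¹ := by ring

lemma gaussDens_anti {σ : ℝ} (hσ : 0 < σ) {t u : ℝ} (h : |t| ≤ |u|) :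
    gaussDens σ u ≤ gaussDens σ t := by
  unfold gaussDens
  have h2 : (0:ℝ) < 2 * σ ^ 2 := by positivity
  have hsq : t ^ 2 ≤ u ^ 2 := by
    rw [← sq_abs t, ← sq_abs u]; exact pow_le_pow_left₀ (abs_nonneg t) h 2
  gcongr

lemma continuous_gaussDens (σ : ℝ) : Continuous (gaussDens σ) := by
  unfold gaussDens
  fun_prop

lemma gaussDens_rewrite {σ : ℝ} (hσ : 0 < σ) (t : ℝ) :
    gaussDens σ t = (Real.sqrt (2 * Real.pi * σ ^ 2))⁻¹ *
      Real.exp (-(1/(2*σ^2)) * t ^ 2) := by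
  unfold gaussDens
  congr 1
  congr 1
  field_simp

lemma integrable_gaussDens {σ : ℝ} (hσ : 0 < σ) (μ : ℝ) :
    Integrable (fun x => gaussDens σ (x - μ)) := by
  have hb : (0:ℝ) < 1/(2*σ^2) := by positivity
  have := ((integrable_exp_neg_mul_sq hb).comp_sub_right μ).const_mul
    ((Real.sqrt (2 * Real.pi * σ ^ 2))⁻¹)
  apply this.congr
  filter_upwards with x
  rw [gaussDens_rewrite hσ]

lemma integral_gaussDens {σ : ℝ} (hσ : 0 < σ) (μ : ℝ) :
    ∫ x, gaussDens σ (x - μ) = 1 := by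
  rw [MeasureTheory.integral_sub_right_eq_self (fun t => gaussDens σ t) μ]
  have hb : (0:ℝ) < 1/(2*σ^2) := by positivity
  simp_rw [gaussDens_rewrite hσ]
  rw [integral_const_mul, integral_gaussian]
  rw [show Real.pi / (1/(2*σ^2)) = 2 * Real.pi * σ ^ 2 by field_simp]
  rw [inv_mul_cancel₀]
  positivity

lemma gauss_tail {σ μ d : ℝ} (hσ : 0 < σ) (hd : 0 ≤ d) {T : Set ℝ}
    (hT : MeasurableSet T) (h : ∀ x ∈ T, d ≤ |x - μ|) :
    ∫ x in T, gaussDens σ (x - μ) ≤ Real.sqrt 2 * Real.exp (-d^2/(4*σ^2)) := by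
  set c := (Real.sqrt (2 * Real.pi * σ ^ 2))⁻¹ with hc
  have hcpos : 0 < c := by rw [hc]; positivity
  set B : ℝ → ℝ := fun x =>
    Real.exp (-d^2/(4*σ^2)) * (c * Real.exp (-(1/(4*σ^2)) * (x - μ) ^ 2)) with hB
  have hBint : Integrable B := by
    have hb : (0:ℝ) < 1/(4*σ^2) := by positivity
    exact (((integrable_exp_neg_mul_sq hb).comp_sub_right μ).const_mul c).const_mul _
  have hpt : ∀ x ∈ T, gaussDens σ (x - μ) ≤ B x := by
    intro x hx
    have habs : d ≤ |x - μ| := h x hx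
    have hsq : d ^ 2 ≤ (x - μ) ^ 2 := by
      rw [← sq_abs (x-μ)]; exact pow_le_pow_left₀ hd habs 2
    show gaussDens σ (x-μ) ≤ Real.exp (-d^2/(4*σ^2)) * (c * Real.exp (-(1/(4*σ^2)) * (x - μ) ^ 2))
    unfold gaussDens
    rw [← hc, ← mul_assoc, mul_comm (Real.exp (-d^2/(4*σ^2))) c, mul_assoc, ← Real.exp_add]
    gcongr c * Real.exp ?_
    rw [show -(1/(4*σ^2))*(x-μ)^2 = -(x-μ)^2/(4*σ^2) by ring, ← add_div,
      div_le_div_iff₀ (by positivity) (by positivity)]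
    nlinarith [mul_le_mul_of_nonneg_right hsq (sq_nonneg σ)]
  calc ∫ x in T, gaussDens σ (x - μ)
      ≤ ∫ x in T, B x := by
        apply setIntegral_mono_on ((integrable_gaussDens hσ μ).integrableOn) hBint.integrableOn hT hpt
    _ ≤ ∫ x, B x := setIntegral_le_integral hBint (ae_of_all _ (fun x => by show (0:ℝ) ≤ Real.exp (-d^2/(4*σ^2)) * (c * Real.exp (-(1/(4*σ^2)) * (x - μ) ^ 2)); positivity))
    _ = Real.sqrt 2 * Real.exp (-d^2/(4*σ^2)) := by
        show ∫ (x:ℝ), Real.exp (-d^2/(4*σ^2)) * (c * Real.exp (-(1/(4*σ^2)) * (x - μ) ^ 2)) = _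
        rw [integral_const_mul, integral_const_mul, integral_sub_right_eq_self (fun t => Real.exp (-(1/(4*σ^2)) * t ^ 2)) μ, integral_gaussian]
        rw [show Real.pi / (1/(4*σ^2)) = 2 * (2 * Real.pi * σ ^ 2) by field_simp; ring]
        rw [Real.sqrt_mul (by norm_num) _, hc]
        have : (Real.sqrt (2 * Real.pi * σ ^ 2))⁻¹ * (Real.sqrt 2 * Real.sqrt (2 * Real.pi * σ ^ 2)) = Real.sqrt 2 := by
          field_simp
        rw [this]; ring

-- integrability of gauss shift against any finite measure
lemma integrable_gauss_shift (G : Measure ℝ) [IsFiniteMeasure G] {σ : ℝ} (hσ : 0 < σ) (x : ℝ) :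
    Integrable (fun θ => gaussDens σ (x - θ)) G := by
  apply Integrable.mono' (integrable_const ((Real.sqrt (2 * Real.pi * σ ^ 2))⁻¹))
  · exact (((continuous_gaussDens σ).comp (continuous_const.sub continuous_id)).aestronglyMeasurable)
  · filter_upwards with θ
    rw [Real.norm_eq_abs, abs_of_nonneg (gaussDens_nonneg hσ _)]
    exact gaussDens_le hσ _

-- Chebyshev
lemma integrable_gauss_shift' (G : Measure ℝ) [IsFiniteMeasure G] {σ : ℝ} (hσ : 0 < σ) (x : ℝ) :
    Integrable (fun θ => gaussDens σ (x - θ)) G := integrable_gauss_shift G hσ x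

lemma cheb_half (G : Measure ℝ) [IsProbabilityMeasure G] {V : ℝ} (hV : 0 < V)
    (hG : MeanZeroVarLe G V) :
    (1:ℝ)/2 ≤ (G {θ : ℝ | |θ| ≤ Real.sqrt (2*V)}).toReal := by
  set a := Real.sqrt (2*V) with ha
  have ha2 : a ^ 2 = 2*V := Real.sq_sqrt (by linarith)
  have hapos : 0 < a := Real.sqrt_pos.2 (by linarith)
  set S : Set ℝ := {θ : ℝ | a < |θ|} with hS
  have hSmeas : MeasurableSet S := by
    apply measurableSet_lt measurable_const (measurable_id.abs)
  have h1 : a^2 * (G S).toReal ≤ ∫ θ, θ^2 ∂G := by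
    calc a^2 * (G S).toReal = ∫ _ in S, a^2 ∂G := by rw [setIntegral_const, smul_eq_mul, measureReal_def]; ring
      _ ≤ ∫ θ in S, θ^2 ∂G := by
          apply setIntegral_mono_on (integrableOn_const (measure_lt_top G S).ne)
            hG.2.1.integrableOn hSmeas
          intro θ hθ
          have : a ≤ |θ| := le_of_lt hθ
          calc a^2 ≤ |θ|^2 := by gcongr
            _ = θ^2 := sq_abs θ
      _ ≤ ∫ θ, θ^2 ∂G := setIntegral_le_integral hG.2.1
          (ae_of_all _ (fun θ => sq_nonneg θ))
  have h2 : (G S).toReal ≤ 1/2 := by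
    have hv := hG.2.2.2
    rw [ha2] at h1
    have : 2*V * (G S).toReal ≤ V := le_trans h1 hv
    nlinarith [ENNReal.toReal_nonneg (a := G S)]
  have hcompl : {θ : ℝ | |θ| ≤ a} = Sᶜ := by
    ext θ; simp [hS, not_lt]
  rw [hcompl]
  have := prob_compl_eq_one_sub (μ := G) hSmeas
  rw [this, ENNReal.toReal_sub_of_le prob_le_one (by simp)]
  simp only [ENNReal.toReal_one]
  linarith

-- integrability of gauss shift against any finite measure
lemma margDens_ge (G : Measure ℝ) [IsProbabilityMeasure G] {V σ : ℝ} (hV : 0 < V)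
    (hG : MeanZeroVarLe G V) (hσ : 0 < σ) (x : ℝ) :
    (1/2) * gaussDens σ (|x| + Real.sqrt (2*V)) ≤ margDens G σ x := by
  set a := Real.sqrt (2*V) with ha
  have hanneg : 0 ≤ a := Real.sqrt_nonneg _
  set A : Set ℝ := {θ : ℝ | |θ| ≤ a} with hA
  have hAmeas : MeasurableSet A := measurableSet_le (measurable_id.abs) measurable_const
  have step1 : ∫ θ in A, gaussDens σ (x - θ) ∂G ≤ margDens G σ x :=
    setIntegral_le_integral (integrable_gauss_shift' G hσ x)
      (ae_of_all _ (fun θ => gaussDens_nonneg hσ _))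
  have step2 : (1/2) * gaussDens σ (|x| + a) ≤ ∫ θ in A, gaussDens σ (x - θ) ∂G := by
    calc (1/2) * gaussDens σ (|x| + a)
        ≤ (G A).toReal * gaussDens σ (|x| + a) := by
          apply mul_le_mul_of_nonneg_right (cheb_half G hV hG) (gaussDens_nonneg hσ _)
      _ = ∫ _ in A, gaussDens σ (|x| + a) ∂G := by rw [setIntegral_const, smul_eq_mul, measureReal_def]
      _ ≤ ∫ θ in A, gaussDens σ (x - θ) ∂G := by
          apply setIntegral_mono_on (integrableOn_const (measure_lt_top G A).ne)
            (integrable_gauss_shift' G hσ x).integrableOn hAmeas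
          intro θ hθ
          apply gaussDens_anti hσ
          rw [abs_of_nonneg (show (0:ℝ) ≤ |x| + a by positivity)]
          calc |x - θ| ≤ |x| + |θ| := abs_sub _ _
            _ ≤ |x| + a := add_le_add le_rfl hθ
  linarith

lemma margDens_pos (G : Measure ℝ) [IsProbabilityMeasure G] {V σ : ℝ} (hV : 0 < V)
    (hG : MeanZeroVarLe G V) (hσ : 0 < σ) (x : ℝ) : 0 < margDens G σ x :=
  lt_of_lt_of_le (mul_pos (by norm_num) (gaussDens_pos hσ _)) (margDens_ge G hV hG hσ x)

-- integrability of gauss shift against any finite measure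
lemma tail_toReal (G : Measure ℝ) [IsProbabilityMeasure G] {C k s : ℝ}
    (htail : TailCond G C k) (hs : 0 < s) : (G (Set.Ioi s)).toReal ≤ C * s ^ (-k) := by
  have h1 : Set.Ioi s = (Set.Iic s)ᶜ := (Set.compl_Iic).symm
  rw [h1, prob_compl_eq_one_sub measurableSet_Iic,
    ENNReal.toReal_sub_of_le prob_le_one (by simp), ENNReal.toReal_one]
  exact le_trans (le_max_left _ _) (htail s hs)

lemma num_le (G : Measure ℝ) [IsProbabilityMeasure G] {C k s σ : ℝ}
    (htail : TailCond G C k) (hs : 0 < s) (hσ : 0 < σ) (hC : 0 < C) (x : ℝ) :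
    ∫ θ in Set.Ioi s, gaussDens σ (x - θ) ∂G ≤
      (Real.sqrt (2 * Real.pi * σ ^ 2))⁻¹ * (C * s ^ (-k)) := by
  calc ∫ θ in Set.Ioi s, gaussDens σ (x - θ) ∂G
      ≤ ∫ _ in Set.Ioi s, (Real.sqrt (2 * Real.pi * σ ^ 2))⁻¹ ∂G := by
        apply setIntegral_mono_on (integrable_gauss_shift' G hσ x).integrableOn
          (integrableOn_const (measure_lt_top G _).ne) measurableSet_Ioi
        intro θ _; exact gaussDens_le hσ _
    _ = (G (Set.Ioi s)).toReal * (Real.sqrt (2 * Real.pi * σ ^ 2))⁻¹ := by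
        rw [setIntegral_const, smul_eq_mul, measureReal_def]
    _ ≤ (C * s ^ (-k)) * (Real.sqrt (2 * Real.pi * σ ^ 2))⁻¹ := by
        apply mul_le_mul_of_nonneg_right (tail_toReal G htail hs) (by positivity)
    _ = (Real.sqrt (2 * Real.pi * σ ^ 2))⁻¹ * (C * s ^ (-k)) := by ring

lemma postSurv_nonneg (G : Measure ℝ) [IsProbabilityMeasure G] {σ : ℝ} (hσ : 0 < σ)
    (s x : ℝ) : 0 ≤ postSurv G σ s x := by
  unfold postSurv
  apply div_nonneg _ _
  · exact setIntegral_nonneg measurableSet_Ioi (fun θ _ => gaussDens_nonneg hσ _)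
  · exact integral_nonneg (fun θ => gaussDens_nonneg hσ _)

lemma postSurv_le_one (G : Measure ℝ) [IsProbabilityMeasure G] {V σ : ℝ} (hV : 0 < V)
    (hG : MeanZeroVarLe G V) (hσ : 0 < σ) (s x : ℝ) : postSurv G σ s x ≤ 1 := by
  unfold postSurv
  rw [div_le_one (margDens_pos G hV hG hσ x)]
  exact setIntegral_le_integral (integrable_gauss_shift' G hσ x)
    (ae_of_all _ (fun θ => gaussDens_nonneg hσ _))

lemma postSurv_le_poly (G : Measure ℝ) [IsProbabilityMeasure G] {V C k s σ : ℝ} (hV : 0 < V)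
    (hG : MeanZeroVarLe G V) (htail : TailCond G C k) (hs : 0 < s) (hσ : 0 < σ) (hC : 0 < C)
    (x : ℝ) :
    postSurv G σ s x ≤ 2 * (C * s ^ (-k)) *
      Real.exp ((|x| + Real.sqrt (2*V)) ^ 2 / (2 * σ ^ 2)) := by
  set a := Real.sqrt (2*V) with ha
  set u := |x| + a with hu
  have hd : 0 < (1/2) * gaussDens σ u := mul_pos (by norm_num) (gaussDens_pos hσ _)
  have hnum : ∫ θ in Set.Ioi s, gaussDens σ (x - θ) ∂G ≤
      (Real.sqrt (2 * Real.pi * σ ^ 2))⁻¹ * (C * s ^ (-k)) := num_le G htail hs hσ hC x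
  calc postSurv G σ s x
      ≤ (∫ θ in Set.Ioi s, gaussDens σ (x - θ) ∂G) / ((1/2) * gaussDens σ u) := by
        unfold postSurv
        apply div_le_div_of_nonneg_left
          (setIntegral_nonneg measurableSet_Ioi (fun θ _ => gaussDens_nonneg hσ _))
          hd (margDens_ge G hV hG hσ x)
    _ ≤ ((Real.sqrt (2 * Real.pi * σ ^ 2))⁻¹ * (C * s ^ (-k))) / ((1/2) * gaussDens σ u) := by
        gcongr
    _ = 2 * (C * s ^ (-k)) * Real.exp (u ^ 2 / (2 * σ ^ 2)) := by
        unfold gaussDens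
        rw [show -u^2/(2*σ^2) = -(u^2/(2*σ^2)) by ring, Real.exp_neg]
        have h1 : Real.sqrt (2*Real.pi*σ^2) ≠ 0 := by positivity
        have h2 : Real.exp (u^2/(2*σ^2)) ≠ 0 := Real.exp_ne_zero _
        field_simp

-- integrability of gauss shift against any finite measure
lemma continuous_setInt (G : Measure ℝ) [IsProbabilityMeasure G] {σ : ℝ} (hσ : 0 < σ)
    (T : Set ℝ) : Continuous (fun x => ∫ θ in T, gaussDens σ (x - θ) ∂G) := by
  apply continuous_of_dominated (bound := fun _ => (Real.sqrt (2 * Real.pi * σ ^ 2))⁻¹)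
  · intro x
    exact (((continuous_gaussDens σ).comp (continuous_const.sub continuous_id)).aestronglyMeasurable)
  · intro x
    filter_upwards with θ
    rw [Real.norm_eq_abs, abs_of_nonneg (gaussDens_nonneg hσ _)]
    exact gaussDens_le hσ _
  · exact integrable_const _
  · filter_upwards with θ
    exact (continuous_gaussDens σ).comp (continuous_id.sub continuous_const)

lemma continuous_margDens (G : Measure ℝ) [IsProbabilityMeasure G] {σ : ℝ} (hσ : 0 < σ) :
    Continuous (margDens G σ) := by
  have := continuous_setInt G hσ (Set.univ)
  simp only [MeasureTheory.Measure.restrict_univ] at this; exact this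

lemma continuous_postSurv (G : Measure ℝ) [IsProbabilityMeasure G] {V σ : ℝ} (hV : 0 < V)
    (hG : MeanZeroVarLe G V) (hσ : 0 < σ) (s : ℝ) : Continuous (fun x => postSurv G σ s x) := by
  unfold postSurv
  exact (continuous_setInt G hσ (Set.Ioi s)).div (continuous_margDens G hσ)
    (fun x => (margDens_pos G hV hG hσ x).ne')

lemma integrable_SPhi (G : Measure ℝ) [IsProbabilityMeasure G] {V σ : ℝ} (hV : 0 < V)
    (hG : MeanZeroVarLe G V) (hσ : 0 < σ) (s μ : ℝ) :
    Integrable (fun x => postSurv G σ s x * gaussDens σ (x - μ)) := by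
  apply Integrable.mono' (integrable_gaussDens hσ μ)
  · exact ((continuous_postSurv G hV hG hσ s).mul
      ((continuous_gaussDens σ).comp (continuous_id.sub continuous_const))).aestronglyMeasurable
  · filter_upwards with x
    rw [Real.norm_eq_abs, abs_of_nonneg (mul_nonneg (postSurv_nonneg G hσ s x) (gaussDens_nonneg hσ _))]
    calc postSurv G σ s x * gaussDens σ (x - μ) ≤ 1 * gaussDens σ (x - μ) := by
          apply mul_le_mul_of_nonneg_right (postSurv_le_one G hV hG hσ s x) (gaussDens_nonneg hσ _)
      _ = gaussDens σ (x - μ) := one_mul _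

lemma F_nonneg (G : Measure ℝ) [IsProbabilityMeasure G] {σ : ℝ} (hσ : 0 < σ) (s μ : ℝ) :
    0 ≤ ∫ x, postSurv G σ s x * gaussDens σ (x - μ) :=
  integral_nonneg (fun x => mul_nonneg (postSurv_nonneg G hσ s x) (gaussDens_nonneg hσ _))

lemma F_le_one (G : Measure ℝ) [IsProbabilityMeasure G] {V σ : ℝ} (hV : 0 < V)
    (hG : MeanZeroVarLe G V) (hσ : 0 < σ) (s μ : ℝ) :
    (∫ x, postSurv G σ s x * gaussDens σ (x - μ)) ≤ 1 := by
  calc (∫ x, postSurv G σ s x * gaussDens σ (x - μ)) ≤ ∫ x, gaussDens σ (x - μ) := by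
        apply integral_mono (integrable_SPhi G hV hG hσ s μ) (integrable_gaussDens hσ μ)
        intro x
        calc postSurv G σ s x * gaussDens σ (x - μ) ≤ 1 * gaussDens σ (x - μ) :=
              mul_le_mul_of_nonneg_right (postSurv_le_one G hV hG hσ s x) (gaussDens_nonneg hσ _)
          _ = gaussDens σ (x - μ) := one_mul _
    _ = 1 := integral_gaussDens hσ μ

-- integrability of gauss shift against any finite measure
set_option maxHeartbeats 1000000 in
lemma F_le_master (G : Measure ℝ) [IsProbabilityMeasure G] {V C k σ s μ : ℝ} (hV : 0 < V)
    (hG : MeanZeroVarLe G V) (htail : TailCond G C k) (hC : 0 < C) (hk : 2 < k)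
    (hσ1 : 1 ≤ σ) (hs : 1 ≤ s) (hμ : |μ| < σ) :
    (∫ x, postSurv G σ s x * gaussDens σ (x - μ)) ≤
      2 * (C * s ^ (-k)) * Real.exp ((Real.sqrt (2*V))^2/2) *
        Real.exp ((Real.sqrt (2*V) + 2) * (1 + 2*Real.sqrt (k * Real.log (2+s)))) +
      Real.sqrt 2 * (2+s) ^ (-k) := by
  have hσ : 0 < σ := lt_of_lt_of_le one_pos hσ1
  set a := Real.sqrt (2*V) with ha
  have hanneg : 0 ≤ a := Real.sqrt_nonneg _
  set L := Real.log (2+s) with hL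
  have hLpos : 0 < L := Real.log_pos (by linarith)
  have hkL : 0 ≤ k * L := by positivity
  set r := 1 + 2*Real.sqrt (k*L) with hr
  have hr1 : 1 ≤ r := by rw [hr]; nlinarith [Real.sqrt_nonneg (k*L)]
  have hrsq : (r - 1)^2 = 4 * (k*L) := by
    rw [hr, show (1 + 2*Real.sqrt (k*L) - 1) = 2*Real.sqrt (k*L) by ring, mul_pow,
      Real.sq_sqrt hkL]; norm_num
  set A : Set ℝ := Icc (-(σ*r)) (σ*r) with hA
  have hAmeas : MeasurableSet A := measurableSet_Icc
  set f : ℝ → ℝ := fun x => postSurv G σ s x * gaussDens σ (x - μ) with hf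
  have hfint : Integrable f := integrable_SPhi G hV hG hσ s μ
  have hfnn : ∀ x, 0 ≤ f x := fun x =>
    mul_nonneg (postSurv_nonneg G hσ s x) (gaussDens_nonneg hσ _)
  have hsplit : (∫ x, f x) = (∫ x in A, f x) + (∫ x in Aᶜ, f x) :=
    (integral_add_compl hAmeas hfint).symm
  have hs0 : (0:ℝ) < s := lt_of_lt_of_le one_pos hs
  -- tail part
  have htail_part : (∫ x in Aᶜ, f x) ≤ Real.sqrt 2 * (2+s) ^ (-k) := by
    set d := σ * r - |μ| with hd
    have hd0 : 0 ≤ d := by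
      rw [hd]; nlinarith [abs_nonneg μ, hμ.le]
    have habs : ∀ x ∈ Aᶜ, d ≤ |x - μ| := by
      intro x hx
      simp only [hA, mem_compl_iff, mem_Icc, not_and_or, not_le] at hx
      have hgt : σ * r < |x| := by
        rcases hx with h | h
        · rw [abs_of_nonpos (by nlinarith [hr1])]; linarith
        · calc σ * r < x := h
            _ ≤ |x| := le_abs_self x
      calc d = σ * r - |μ| := hd
        _ ≤ |x| - |μ| := by linarith
        _ ≤ |x - μ| := abs_sub_abs_le_abs_sub x μ
    calc (∫ x in Aᶜ, f x) ≤ ∫ x in Aᶜ, gaussDens σ (x - μ) := by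
          apply setIntegral_mono_on hfint.integrableOn
            (integrable_gaussDens hσ μ).integrableOn hAmeas.compl
          intro x _
          calc f x ≤ 1 * gaussDens σ (x - μ) :=
                mul_le_mul_of_nonneg_right (postSurv_le_one G hV hG hσ s x) (gaussDens_nonneg hσ _)
            _ = gaussDens σ (x - μ) := one_mul _
      _ ≤ Real.sqrt 2 * Real.exp (-d^2/(4*σ^2)) := gauss_tail hσ hd0 hAmeas.compl habs
      _ ≤ Real.sqrt 2 * (2+s) ^ (-k) := by
          have hdge : σ * (r - 1) ≤ d := by rw [hd]; nlinarith [hμ.le]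
          have h1 : Real.exp (-d^2/(4*σ^2)) ≤ Real.exp (-(k*L)) := by
            apply Real.exp_le_exp.2
            rw [div_le_iff₀ (by positivity : (0:ℝ) < 4*σ^2)]
            have : (σ*(r-1))^2 ≤ d^2 := by
              apply pow_le_pow_left₀ (by nlinarith [hr1, hσ]) hdge
            calc -d^2 ≤ -(σ*(r-1))^2 := by linarith
              _ = -(σ^2 * (r-1)^2) := by ring
              _ = -(σ^2 * (4*(k*L))) := by rw [hrsq]
              _ ≤ -(k*L) * (4*σ^2) := le_of_eq (by ring)
          have h2 : Real.exp (-(k*L)) = (2+s) ^ (-k) := by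
            rw [Real.rpow_def_of_pos (by linarith : (0:ℝ) < 2+s)]
            congr 1
            rw [hL]; ring
          rw [← h2]
          exact mul_le_mul_of_nonneg_left h1 (Real.sqrt_nonneg 2)
  -- central part
  have hcentral : (∫ x in A, f x) ≤
      2 * (C * s ^ (-k)) * Real.exp (a^2/2) * Real.exp ((a + 2) * r) := by
    set Dc := 2 * (C * s ^ (-k)) * (Real.sqrt (2 * Real.pi * σ ^ 2))⁻¹ *
      Real.exp (a^2/2 + (a+1)*r) with hDc
    have hpt : ∀ x ∈ A, f x ≤ Dc := by
      intro x hx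
      simp only [hA, mem_Icc] at hx
      have hxabs : |x| ≤ σ * r := abs_le.2 ⟨by linarith [hx.1], hx.2⟩
      have hexp : (|x| + a)^2 / (2*σ^2) + (-(x - μ)^2 / (2*σ^2)) ≤ a^2/2 + (a+1)*r := by
        rw [← add_div, div_le_iff₀ (by positivity : (0:ℝ) < 2*σ^2)]
        have e1 : x * μ ≤ |x| * σ := by
          calc x * μ ≤ |x * μ| := le_abs_self _
            _ = |x| * |μ| := abs_mul x μ
            _ ≤ |x| * σ := mul_le_mul_of_nonneg_left hμ.le (abs_nonneg x)
        have e2 : (|x| + a)^2 - (x - μ)^2 ≤ 2*|x| * (a + σ) + a^2 := by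
          have hxx : x^2 = |x|^2 := (sq_abs x).symm
          have hmm : μ^2 ≥ 0 := sq_nonneg μ
          nlinarith [e1, sq_nonneg μ, sq_abs x]
        have e3 : 2*|x| * (a+σ) + a^2 ≤ 2*(σ*r)*(a+σ) + a^2 := by
          have := mul_le_mul_of_nonneg_right (show 2*|x| ≤ 2*(σ*r) by linarith)
            (show 0 ≤ a+σ by linarith)
          linarith
        have e4 : 2*(σ*r)*(a+σ) + a^2 ≤ (a^2/2 + (a+1)*r) * (2*σ^2) := by
          have hσ2 : 1 ≤ σ^2 := by nlinarith
          have hra : 0 ≤ r := by linarith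
          -- 2σr(a+σ) = 2σ²r(a/σ + 1) ≤ 2σ²r(a+1); a² ≤ a²σ²
          have hra0 : 0 ≤ a*σ*(σ-1) :=
            mul_nonneg (mul_nonneg hanneg hσ.le) (by linarith)
          have c0 : 2*σ*(a+σ) ≤ (a+1)*(2*σ^2) := by nlinarith
          have c1 : r*(2*σ*(a+σ)) ≤ r*((a+1)*(2*σ^2)) :=
            mul_le_mul_of_nonneg_left c0 hra
          have c2 : a^2 ≤ a^2/2 * (2*σ^2) := by nlinarith [mul_nonneg (sq_nonneg a) (show (0:ℝ) ≤ σ^2 - 1 by linarith)]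
          nlinarith [c1, c2]
        nlinarith [e2, e3, e4]
      calc f x ≤ (2 * (C * s ^ (-k)) * Real.exp ((|x| + a) ^ 2 / (2 * σ ^ 2))) *
            ((Real.sqrt (2 * Real.pi * σ ^ 2))⁻¹ * Real.exp (-(x-μ)^2 / (2*σ^2))) := by
            show postSurv G σ s x * gaussDens σ (x - μ) ≤ _
            apply mul_le_mul (postSurv_le_poly G hV hG htail hs0 hσ hC x)
              (le_of_eq rfl) (gaussDens_nonneg hσ _) (by positivity)
        _ = 2 * (C * s ^ (-k)) * (Real.sqrt (2 * Real.pi * σ ^ 2))⁻¹ *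
            Real.exp ((|x| + a)^2 / (2*σ^2) + (-(x - μ)^2 / (2*σ^2))) := by
            rw [Real.exp_add]; ring
        _ ≤ Dc := by
            rw [hDc]
            apply mul_le_mul_of_nonneg_left (Real.exp_le_exp.2 hexp) (by positivity)
    calc (∫ x in A, f x) ≤ ∫ _ in A, Dc := by
          apply setIntegral_mono_on hfint.integrableOn
            (integrableOn_const (by rw [hA]; exact measure_Icc_lt_top.ne)) hAmeas hpt
      _ = (volume A).toReal * Dc := by rw [setIntegral_const, smul_eq_mul, measureReal_def]
      _ = (2*(σ*r)) * Dc := by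
          rw [hA, Real.volume_Icc, ENNReal.toReal_ofReal (by nlinarith)]
          ring_nf
      _ ≤ 2 * (C * s ^ (-k)) * Real.exp (a^2/2) * Real.exp ((a + 2) * r) := by
          rw [hDc]
          have hsqrt : Real.sqrt (2 * Real.pi * σ ^ 2) = σ * Real.sqrt (2 * Real.pi) := by
            rw [show 2 * Real.pi * σ ^ 2 = σ^2 * (2*Real.pi) by ring,
              Real.sqrt_mul (sq_nonneg σ), Real.sqrt_sq hσ.le]
          rw [hsqrt]
          have hsp : 2 ≤ Real.sqrt (2*Real.pi) := by
            rw [Real.le_sqrt' (by norm_num)]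
            nlinarith [Real.pi_gt_three]
          have hspos : 0 < Real.sqrt (2*Real.pi) := by linarith
          -- (2σr) * (X * (σ √2π)⁻¹ * e^{a²/2+(a+1)r}) ≤ X e^{a²/2} e^{(a+2)r}
          rw [mul_inv, Real.exp_add, show (a+2)*r = (a+1)*r + r by ring, Real.exp_add]
          have hrexp : r ≤ Real.exp r := by linarith [Real.add_one_le_exp r]
          have key : (2*(σ*r)) * (σ⁻¹ * (Real.sqrt (2*Real.pi))⁻¹) ≤ Real.exp r := by
            rw [show (2*(σ*r)) * (σ⁻¹ * (Real.sqrt (2*Real.pi))⁻¹)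
              = (σ * σ⁻¹) * (2*r*(Real.sqrt (2*Real.pi))⁻¹) by ring,
              mul_inv_cancel₀ hσ.ne', one_mul]
            calc 2*r*(Real.sqrt (2*Real.pi))⁻¹ ≤ 2*r*2⁻¹ := by
                  apply mul_le_mul_of_nonneg_left _ (by linarith)
                  exact inv_anti₀ (by norm_num) hsp
              _ = r := by ring
              _ ≤ Real.exp r := hrexp
          calc 2*(σ*r) * (2 * (C * s ^ (-k)) * (σ⁻¹ * (Real.sqrt (2*Real.pi))⁻¹) *
                (Real.exp (a^2/2) * Real.exp ((a+1)*r)))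
              = (2 * (C * s ^ (-k)) * (Real.exp (a^2/2) * Real.exp ((a+1)*r))) *
                ((2*(σ*r)) * (σ⁻¹ * (Real.sqrt (2*Real.pi))⁻¹)) := by ring
            _ ≤ (2 * (C * s ^ (-k)) * (Real.exp (a^2/2) * Real.exp ((a+1)*r))) * Real.exp r := by
                apply mul_le_mul_of_nonneg_left key (by positivity)
            _ = 2 * (C * s ^ (-k)) * Real.exp (a^2/2) * (Real.exp ((a+1)*r) * Real.exp r) := by ring
  exact le_trans (le_of_eq hsplit) (add_le_add hcentral htail_part)

lemma amgm_div {c u e : ℝ} (he : 0 < e) (hu : 0 ≤ u) :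
    c * u ≤ c^2/(2*(2*e)) + e * u^2 := by
  have hw : c^2 = (c^2/(2*(2*e)))*(2*(2*e)) := by field_simp
  nlinarith [sq_nonneg (c - 2*e*u), he, sq_nonneg u, sq_nonneg c]

lemma weight_bound {a C₁ k s : ℝ} (ha : 0 ≤ a) (hC : 0 < C₁) (hk : 2 < k) (hs : 1 ≤ s) :
    s * (2 * (C₁ * s ^ (-k)) * Real.exp (a^2/2) *
      Real.exp ((a + 2) * (1 + 2*Real.sqrt (k * Real.log (2+s)))) + Real.sqrt 2 * (2+s) ^ (-k))
    ≤ (2*C₁*Real.exp (a^2/2) *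
        Real.exp ((a+2) + (2*(a+2)*Real.sqrt k)^2/(2*(k-2))) * 3 ^ ((k-2)/2)) * s ^ (-(k/2))
      + 2 * s ^ (1-k) := by
  have hs0 : (0:ℝ) < s := lt_of_lt_of_le one_pos hs
  have h2s : (0:ℝ) < 2 + s := by linarith
  set L := Real.log (2+s) with hL
  have hLnn : 0 ≤ L := Real.log_nonneg (by linarith)
  have hknn : (0:ℝ) ≤ k := by linarith
  set u := Real.sqrt L with hu
  have hun : 0 ≤ u := Real.sqrt_nonneg _
  have hu2 : u^2 = L := Real.sq_sqrt hLnn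
  set c := 2*(a+2)*Real.sqrt k with hc
  have hsplitkL : Real.sqrt (k*L) = Real.sqrt k * u := by
    rw [hu, Real.sqrt_mul hknn]
  have he : (0:ℝ) < (k-2)/2 := by linarith
  have key : c * u ≤ c^2/(2*(k-2)) + (k-2)/2 * u^2 := by
    have := amgm_div (c := c) (u := u) he hun
    rw [show 2*(2*((k-2)/2)) = 2*(k-2) by ring] at this
    exact this
  -- exponential bound
  have hexp1 : Real.exp ((a + 2) * (1 + 2*Real.sqrt (k * L)))
      ≤ Real.exp ((a+2) + c^2/(2*(k-2))) * (2+s) ^ ((k-2)/2) := by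
    rw [show (2+s) ^ ((k-2)/2) = Real.exp (Real.log (2+s) * ((k-2)/2)) from
        Real.rpow_def_of_pos h2s _, ← Real.exp_add]
    apply Real.exp_le_exp.2
    have : (a + 2) * (1 + 2*Real.sqrt (k * L)) = (a+2) + c * u := by
      rw [hsplitkL, hc]; ring
    rw [this, ← hL]
    nlinarith [key, hu2]
  -- rpow bound
  have hrp : (2+s) ^ ((k-2)/2) ≤ 3 ^ ((k-2)/2) * s ^ ((k-2)/2) := by
    rw [← Real.mul_rpow (by norm_num) hs0.le]
    exact Real.rpow_le_rpow h2s.le (by linarith) he.le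
  have hpow : s * s ^ (-k) * s ^ ((k-2)/2) = s ^ (-(k/2)) := by
    rw [show s * s ^ (-k) * s ^ ((k-2)/2) = s^(1:ℝ) * s ^ (-k) * s ^ ((k-2)/2) by
        rw [Real.rpow_one],
      ← Real.rpow_add hs0, ← Real.rpow_add hs0]
    congr 1
    ring
  have hterm2 : s * (Real.sqrt 2 * (2+s) ^ (-k)) ≤ 2 * s ^ (1-k) := by
    have h1 : (2+s) ^ (-k) ≤ s ^ (-k) := Real.rpow_le_rpow_of_nonpos hs0 (by linarith) (by linarith)
    have h2 : Real.sqrt 2 ≤ 2 := by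
      nlinarith [Real.sq_sqrt (by norm_num : (0:ℝ) ≤ 2), Real.sqrt_nonneg 2]
    have h3 : s * s ^ (-k) = s ^ (1-k) := by
      rw [show s * s ^ (-k) = s^(1:ℝ) * s ^ (-k) by rw [Real.rpow_one], ← Real.rpow_add hs0, show (1:ℝ) + -k = 1 - k by ring]
    calc s * (Real.sqrt 2 * (2+s) ^ (-k)) ≤ s * (2 * s ^ (-k)) := by
          apply mul_le_mul_of_nonneg_left _ hs0.le
          apply mul_le_mul h2 h1 (Real.rpow_nonneg h2s.le _) (by norm_num)
      _ = 2 * (s * s ^ (-k)) := by ring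
      _ = 2 * s ^ (1-k) := by rw [h3]
  have hterm1 : s * (2 * (C₁ * s ^ (-k)) * Real.exp (a^2/2) *
      Real.exp ((a + 2) * (1 + 2*Real.sqrt (k * L))))
      ≤ (2*C₁*Real.exp (a^2/2) *
        Real.exp ((a+2) + c^2/(2*(k-2))) * 3 ^ ((k-2)/2)) * s ^ (-(k/2)) := by
    calc s * (2 * (C₁ * s ^ (-k)) * Real.exp (a^2/2) *
        Real.exp ((a + 2) * (1 + 2*Real.sqrt (k * L))))
        ≤ s * (2 * (C₁ * s ^ (-k)) * Real.exp (a^2/2) *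
          (Real.exp ((a+2) + c^2/(2*(k-2))) * ((3:ℝ) ^ ((k-2)/2) * s ^ ((k-2)/2)))) := by
          apply mul_le_mul_of_nonneg_left _ hs0.le
          apply mul_le_mul_of_nonneg_left _ (by positivity)
          exact le_trans hexp1 (mul_le_mul_of_nonneg_left hrp (Real.exp_nonneg _))
      _ = (2*C₁*Real.exp (a^2/2) * Real.exp ((a+2) + c^2/(2*(k-2))) * 3 ^ ((k-2)/2)) *
          (s * s ^ (-k) * s ^ ((k-2)/2)) := by ring
      _ = (2*C₁*Real.exp (a^2/2) * Real.exp ((a+2) + c^2/(2*(k-2))) * 3 ^ ((k-2)/2)) *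
          s ^ (-(k/2)) := by rw [hpow]
  calc s * (2 * (C₁ * s ^ (-k)) * Real.exp (a^2/2) *
      Real.exp ((a + 2) * (1 + 2*Real.sqrt (k * L))) + Real.sqrt 2 * (2+s) ^ (-k))
      = s * (2 * (C₁ * s ^ (-k)) * Real.exp (a^2/2) *
        Real.exp ((a + 2) * (1 + 2*Real.sqrt (k * L)))) + s * (Real.sqrt 2 * (2+s) ^ (-k)) := by
        ring
    _ ≤ _ := add_le_add hterm1 hterm2


noncomputable def psi2 (V C₁ k s : ℝ) : ℝ :=
  (2*C₁*Real.exp ((Real.sqrt (2*V))^2/2) *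
    Real.exp ((Real.sqrt (2*V)+2) + (2*(Real.sqrt (2*V)+2)*Real.sqrt k)^2/(2*(k-2))) *
    3 ^ ((k-2)/2)) * s ^ (-(k/2)) + 2 * s ^ (1-k)

lemma psi2_integrableOn {V C₁ k : ℝ} (hk : 2 < k) :
    IntegrableOn (fun s => psi2 V C₁ k s) (Ioi (1:ℝ)) := by
  unfold psi2
  apply Integrable.add
  · exact (integrableOn_Ioi_rpow_of_lt (by linarith : -(k/2) < -1) one_pos).const_mul _
  · exact (integrableOn_Ioi_rpow_of_lt (by linarith : 1-k < -1) one_pos).const_mul _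

lemma psi2_nonneg {V C₁ k s : ℝ} (hC : 0 < C₁) (hk : 2 < k) (hs : 1 < s) :
    0 ≤ psi2 V C₁ k s := by
  unfold psi2
  have hs0 : (0:ℝ) < s := by linarith
  have h1 : (0:ℝ) ≤ s ^ (-(k/2)) := Real.rpow_nonneg hs0.le _
  have h2 : (0:ℝ) ≤ s ^ (1-k) := Real.rpow_nonneg hs0.le _
  have h3 : (0:ℝ) ≤ (3:ℝ) ^ ((k-2)/2) := Real.rpow_nonneg (by norm_num) _
  positivity

lemma int_psi2_nonneg {V C₁ k : ℝ} (hC : 0 < C₁) (hk : 2 < k) :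
    0 ≤ ∫ s in Ioi (1:ℝ), psi2 V C₁ k s :=
  setIntegral_nonneg measurableSet_Ioi (fun s hs => psi2_nonneg hC hk hs)

lemma mid_bound (G1 : Measure ℝ) [IsProbabilityMeasure G1] {V C₁ k σ μ : ℝ}
    (hV : 0 < V) (hG1 : MeanZeroVarLe G1 V) (htail : TailCond G1 C₁ k)
    (hC : 0 < C₁) (hk : 2 < k) (hσ1 : 1 ≤ σ) (hμ : |μ| < σ) :
    (∫ s in Set.Ioi (0:ℝ), s * (∫ x, postSurv G1 σ s x * gaussDens σ (x - μ)))
      ≤ 1 + ∫ s in Ioi (1:ℝ), psi2 V C₁ k s := by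
  have hσ : 0 < σ := lt_of_lt_of_le one_pos hσ1
  set g : ℝ → ℝ := fun s => s * (∫ x, postSurv G1 σ s x * gaussDens σ (x - μ)) with hg
  by_cases hInt : IntegrableOn g (Ioi (0:ℝ))
  · have hsub1 : IntegrableOn g (Ioc (0:ℝ) 1) := hInt.mono_set Ioc_subset_Ioi_self
    have hsub2 : IntegrableOn g (Ioi (1:ℝ)) := hInt.mono_set (Ioi_subset_Ioi zero_le_one)
    have hunion : Ioi (0:ℝ) = Ioc (0:ℝ) 1 ∪ Ioi (1:ℝ) := (Ioc_union_Ioi_eq_Ioi zero_le_one).symm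
    have hsplit : (∫ s in Ioi (0:ℝ), g s) =
        (∫ s in Ioc (0:ℝ) 1, g s) + (∫ s in Ioi (1:ℝ), g s) := by
      rw [hunion]
      exact setIntegral_union (Ioc_disjoint_Ioi le_rfl) measurableSet_Ioi hsub1 hsub2
    have hp1 : (∫ s in Ioc (0:ℝ) 1, g s) ≤ 1 := by
      calc (∫ s in Ioc (0:ℝ) 1, g s) ≤ ∫ _ in Ioc (0:ℝ) 1, (1:ℝ) := by
            apply setIntegral_mono_on hsub1
              (integrableOn_const (by rw [Real.volume_Ioc]; exact ENNReal.ofReal_ne_top))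
              measurableSet_Ioc
            intro s hs
            rcases hs with ⟨hs0, hs1⟩
            calc g s = s * (∫ x, postSurv G1 σ s x * gaussDens σ (x - μ)) := rfl
              _ ≤ 1 * 1 := by
                  apply mul_le_mul hs1 (F_le_one G1 hV hG1 hσ s μ) (F_nonneg G1 hσ s μ) zero_le_one
              _ = 1 := by norm_num
        _ = 1 := by
            rw [setIntegral_const, smul_eq_mul, measureReal_def, Real.volume_Ioc]
            norm_num
    have hp2 : (∫ s in Ioi (1:ℝ), g s) ≤ ∫ s in Ioi (1:ℝ), psi2 V C₁ k s := by
      apply setIntegral_mono_on hsub2 (psi2_integrableOn hk) measurableSet_Ioi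
      intro s hs
      have hs1 : 1 ≤ s := (le_of_lt hs)
      have hs0 : 0 < s := lt_of_lt_of_le one_pos hs1
      calc g s = s * (∫ x, postSurv G1 σ s x * gaussDens σ (x - μ)) := rfl
        _ ≤ s * (2 * (C₁ * s ^ (-k)) * Real.exp ((Real.sqrt (2*V))^2/2) *
              Real.exp ((Real.sqrt (2*V) + 2) * (1 + 2*Real.sqrt (k * Real.log (2+s)))) +
              Real.sqrt 2 * (2+s) ^ (-k)) := by
            apply mul_le_mul_of_nonneg_left
              (F_le_master G1 hV hG1 htail hC hk hσ1 hs1 hμ) hs0.le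
        _ ≤ psi2 V C₁ k s := by
            unfold psi2
            exact weight_bound (Real.sqrt_nonneg _) hC hk hs1
    calc (∫ s in Ioi (0:ℝ), g s) = _ := hsplit
      _ ≤ 1 + ∫ s in Ioi (1:ℝ), psi2 V C₁ k s := add_le_add hp1 hp2
  · rw [integral_undef hInt]
    have := int_psi2_nonneg (V := V) hC hk
    linarith

/-- uniform bound on the `|μ| < σ` part for `σ ≥ 1`, with `Q'` depending
only on `(V, C₁, k)`, assuming the tail condition on `G1`. -/
theorem stmt_15 (V C₁ k : ℝ) (hV : 0 < V) (hC₁ : 0 < C₁) (hk : 2 < k) :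
    ∃ Q' : ℝ, ∀ (G0 G1 : Measure ℝ)
      [IsProbabilityMeasure G0] [IsProbabilityMeasure G1] (σ : ℝ),
      MeanZeroVarLe G0 V → MeanZeroVarLe G1 V → TailCond G1 C₁ k → 1 ≤ σ →
      (∫ μ in {μ : ℝ | |μ| < σ},
          (∫ s in Set.Ioi (0 : ℝ),
            s * (∫ x, postSurv G1 σ s x * gaussDens σ (x - μ))) ∂G0) ≤ Q' := by
  refine ⟨1 + ∫ s in Ioi (1:ℝ), psi2 V C₁ k s, ?_⟩
  intro G0 G1 _ _ σ hG0 hG1 htail hσ1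
  have hQ0 : 0 ≤ 1 + ∫ s in Ioi (1:ℝ), psi2 V C₁ k s := by
    have := int_psi2_nonneg (V := V) hC₁ hk
    linarith
  set h : ℝ → ℝ := fun μ => (∫ s in Set.Ioi (0:ℝ),
      s * (∫ x, postSurv G1 σ s x * gaussDens σ (x - μ))) with hh
  by_cases hInt : IntegrableOn h {μ : ℝ | |μ| < σ} G0
  · have hset : MeasurableSet {μ : ℝ | |μ| < σ} :=
      measurableSet_lt (measurable_id.abs) measurable_const
    calc (∫ μ in {μ : ℝ | |μ| < σ}, h μ ∂G0)
        ≤ ∫ _ in {μ : ℝ | |μ| < σ}, (1 + ∫ s in Ioi (1:ℝ), psi2 V C₁ k s) ∂G0 := by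
          apply setIntegral_mono_on hInt
            (integrableOn_const (measure_lt_top G0 _).ne) hset
          intro μ hμ
          exact mid_bound G1 hV hG1 htail hC₁ hk hσ1 hμ
      _ = (G0 {μ : ℝ | |μ| < σ}).toReal * (1 + ∫ s in Ioi (1:ℝ), psi2 V C₁ k s) := by
          rw [setIntegral_const, smul_eq_mul, measureReal_def]
      _ ≤ 1 * (1 + ∫ s in Ioi (1:ℝ), psi2 V C₁ k s) := by
          apply mul_le_mul_of_nonneg_right _ hQ0
          exact (ENNReal.toReal_le_of_le_ofReal (by norm_num) (by simpa using prob_le_one))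
      _ = 1 + ∫ s in Ioi (1:ℝ), psi2 V C₁ k s := one_mul _
  · rw [integral_undef hInt]
    exact hQ0
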